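/- arXiv:2501.16846 — 4 statements merged into one kernel-verified Lean document; each statement's English description precedes it below -/
import Mathlib

section
/- Let X be a set and let Φ, Ψ : (X → ℝ)ᵇ → (X → ℝ)ᵇ be two maps on bounded functions that are contractions with respect to the supremum norm (i.e., ‖Γf − Γg‖∞ ≤ ‖f − g‖∞), and suppose Φ f ≥ f pointwise for all bounded f. Define I f := Ψ(Φ f) and J f := Φ(Ψ f). Then for every bounded f : X → ℝ and every n ∈ ℕ, the iterates satisfy Iⁿ f − Jⁿ f ≤ sup_{x ∈ X} (Φ f)(x) − f(x) pointwise. -/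
/-- key estimate `Iⁿ f − Jⁿ f ≤ sup_x ((Φ f)(x) − f(x))` for
contractions `Φ, Ψ` on bounded functions with `Φ f ≥ f`. -/
theorem hopf_lax_key_estimate {X : Type*} [Nonempty X]
    (Φ Ψ : (X → ℝ) → (X → ℝ))
    (hΦb : ∀ f : X → ℝ, (∃ C, ∀ x, |f x| ≤ C) → ∃ C, ∀ x, |Φ f x| ≤ C)
    (hΨb : ∀ f : X → ℝ, (∃ C, ∀ x, |f x| ≤ C) → ∃ C, ∀ x, |Ψ f x| ≤ C)
    (hΦc : ∀ f g : X → ℝ, (∃ C, ∀ x, |f x| ≤ C) → (∃ C, ∀ x, |g x| ≤ C) →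
      ∀ C : ℝ, (∀ x, |f x - g x| ≤ C) → ∀ x, |Φ f x - Φ g x| ≤ C)
    (hΨc : ∀ f g : X → ℝ, (∃ C, ∀ x, |f x| ≤ C) → (∃ C, ∀ x, |g x| ≤ C) →
      ∀ C : ℝ, (∀ x, |f x - g x| ≤ C) → ∀ x, |Ψ f x - Ψ g x| ≤ C)
    (hΦge : ∀ f : X → ℝ, (∃ C, ∀ x, |f x| ≤ C) → ∀ x, f x ≤ Φ f x)
    (f : X → ℝ) (hf : ∃ C, ∀ x, |f x| ≤ C) (n : ℕ) :
    ∀ x, (fun g => Ψ (Φ g))^[n] f x - (fun g => Φ (Ψ g))^[n] f x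
      ≤ ⨆ y, (Φ f y - f y) := by
  set I : (X → ℝ) → (X → ℝ) := fun g => Ψ (Φ g) with hI
  set J : (X → ℝ) → (X → ℝ) := fun g => Φ (Ψ g) with hJ
  -- boundedness of iterates of J
  have hJb : ∀ (k : ℕ) (g : X → ℝ), (∃ C, ∀ x, |g x| ≤ C) →
      ∃ C, ∀ x, |J^[k] g x| ≤ C := by
    intro k
    induction k with
    | zero => intro g hg; simpa using hg
    | succ k ih =>
      intro g hg
      rw [Function.iterate_succ_apply']
      exact hΦb _ (hΨb _ (ih g hg))
  -- contraction property of iterates of J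
  have hJc : ∀ (k : ℕ) (g h : X → ℝ), (∃ C, ∀ x, |g x| ≤ C) →
      (∃ C, ∀ x, |h x| ≤ C) → ∀ C : ℝ, (∀ x, |g x - h x| ≤ C) →
      ∀ x, |J^[k] g x - J^[k] h x| ≤ C := by
    intro k
    induction k with
    | zero => intro g h _ _ C hC x; simpa using hC x
    | succ k ih =>
      intro g h hg hh C hC x
      rw [Function.iterate_succ_apply', Function.iterate_succ_apply']
      exact hΦc _ _ (hΨb _ (hJb k g hg)) (hΨb _ (hJb k h hh)) C
        (hΨc _ _ (hJb k g hg) (hJb k h hh) C (ih g h hg hh C hC)) x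
  -- the sup is an upper bound
  obtain ⟨C, hC⟩ := hf
  obtain ⟨D, hD⟩ := hΦb f ⟨C, hC⟩
  have bdd : BddAbove (Set.range fun y => Φ f y - f y) := by
    refine ⟨D + C, ?_⟩
    rintro _ ⟨y, rfl⟩
    have := (abs_le.1 (hD y)).2
    have := (abs_le.1 (hC y)).1
    dsimp; linarith
  have hle : ∀ y, Φ f y - f y ≤ ⨆ y, (Φ f y - f y) := fun y => le_ciSup bdd y
  have hnn : ∀ y, 0 ≤ Φ f y - f y := fun y => sub_nonneg.2 (hΦge f ⟨C, hC⟩ y)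
  have habs : ∀ y, |Φ f y - f y| ≤ ⨆ y, (Φ f y - f y) := by
    intro y; rw [abs_of_nonneg (hnn y)]; exact hle y
  match n with
  | 0 =>
    intro x
    simp only [Function.iterate_zero, id_eq, sub_self]
    obtain ⟨x₀⟩ := ‹Nonempty X›
    exact le_trans (hnn x₀) (hle x₀)
  | k + 1 =>
    -- identity I^[k+1] f = Ψ (J^[k] (Φ f))
    have hid : ∀ k : ℕ, I^[k + 1] f = Ψ (J^[k] (Φ f)) := by
      intro k
      induction k with
      | zero => simp [hI]
      | succ k ih =>
        rw [Function.iterate_succ_apply', ih]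
        show Ψ (J (J^[k] (Φ f))) = _
        rw [← Function.iterate_succ_apply' J]
    intro x
    have h1 : I^[k + 1] f x = Ψ (J^[k] (Φ f)) x := by rw [hid k]
    have h2 : J^[k + 1] f x = Φ (Ψ (J^[k] f)) x := by
      rw [Function.iterate_succ_apply', hJ]
    have h3 : Ψ (J^[k] f) x ≤ Φ (Ψ (J^[k] f)) x :=
      hΦge _ (hΨb _ (hJb k f ⟨C, hC⟩)) x
    have h4 : |Ψ (J^[k] (Φ f)) x - Ψ (J^[k] f) x| ≤ ⨆ y, (Φ f y - f y) :=
      hΨc _ _ (hJb k _ ⟨D, hD⟩) (hJb k f ⟨C, hC⟩) _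
        (hJc k _ _ ⟨D, hD⟩ ⟨C, hC⟩ _ habs) x
    have := (abs_le.1 h4).2
    show I^[k+1] f x - J^[k+1] f x ≤ _
    rw [h1, h2]
    linarith
end

section
/- Let E be a Banach space, c : E → [0, ∞] convex with c(0) = 0 and superlinear growth, and let Φ be the Hopf-Lax operator (Φ f)(x) = sup_{a ∈ E}(f(x + a) − c(a)). Let f : E → ℝ be bounded with variation var f := sup f − inf f, and let ε > 0. If c̄(var f / ω_f⁻¹(ε)) ≤ ε, where ω_f⁻¹(ε) := sup{δ > 0 : |f(x) − f(y)| ≤ ε whenever ‖x − y‖ ≤ δ} and c̄(b) := sup_{a ∈ E}(b‖a‖ − c(a)), then sup_{x ∈ E} ((Φ f)(x) − f(x)) ≤ ε. -/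
open scoped ENNReal

/-- The Hopf-Lax operator `(Φ f)(x) = sup_{a} (f(x+a) − c(a))`. -/
noncomputable def hopfLax {E : Type*} [NormedAddCommGroup E]
    (c : E → ℝ≥0∞) (f : E → ℝ) (x : E) : ℝ :=
  sSup {y : ℝ | ∃ a : E, c a ≠ ⊤ ∧ y = f (x + a) - (c a).toReal}

/-- The conjugate `c̄(b) = sup_a (b‖a‖ − c(a))`, with values in `EReal`. -/
noncomputable def conjCost {E : Type*} [NormedAddCommGroup E]
    (c : E → ℝ≥0∞) (b : ℝ) : EReal :=
  ⨆ a : E, (((b * ‖a‖ : ℝ) : EReal) - ((c a : ℝ≥0∞) : EReal))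

/-- The inverse modulus of continuity
`ω_f⁻¹(ε) = sup{δ > 0 : |f(x)−f(y)| ≤ ε whenever ‖x−y‖ ≤ δ}`. -/
noncomputable def invModulus {E : Type*} [NormedAddCommGroup E]
    (f : E → ℝ) (ε : ℝ) : ℝ :=
  sSup {δ : ℝ | 0 < δ ∧ ∀ x y : E, ‖x - y‖ ≤ δ → |f x - f y| ≤ ε}

/-- The variation `var f = sup f − inf f`. -/
noncomputable def varF {E : Type*} (f : E → ℝ) : ℝ :=
  (⨆ x : E, f x) - ⨅ x : E, f x

/-- the guarantee `sup_x ((Φ f)(x) − f(x)) ≤ ε` whenever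
`c̄(var f / ω_f⁻¹(ε)) ≤ ε`. -/
theorem hopfLax_guarantee {E : Type*} [NormedAddCommGroup E] [NormedSpace ℝ E]
    [CompleteSpace E]
    (c : E → ℝ≥0∞) (hc0 : c 0 = 0)
    (hconv : ∀ x y : E, ∀ l : ℝ, 0 ≤ l → l ≤ 1 →
      c (l • x + (1 - l) • y) ≤ ENNReal.ofReal l * c x + ENNReal.ofReal (1 - l) * c y)
    (hsl : ∀ M : ℝ, ∃ R : ℝ, ∀ a : E, R ≤ ‖a‖ → ENNReal.ofReal (M * ‖a‖) ≤ c a)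
    (f : E → ℝ) (hfb : ∃ C, ∀ x, |f x| ≤ C) (hfu : UniformContinuous f)
    (ε : ℝ) (hε : 0 < ε)
    (hδ : 0 < invModulus f ε)
    (hcond : conjCost c (varF f / invModulus f ε) ≤ (ε : EReal)) :
    ∀ x : E, hopfLax c f x - f x ≤ ε := by
  intro x
  obtain ⟨C, hC⟩ := hfb
  set δ := invModulus f ε with hδdef
  -- the defining set of invModulus is nonempty and bounded above
  have hset : ∃ δ' ∈ {δ : ℝ | 0 < δ ∧ ∀ x y : E, ‖x - y‖ ≤ δ → |f x - f y| ≤ ε},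
      True := by
    by_contra h
    push_neg at h
    have : {δ : ℝ | 0 < δ ∧ ∀ x y : E, ‖x - y‖ ≤ δ → |f x - f y| ≤ ε} = ∅ := by
      ext t; simpa using h t
    rw [hδdef, invModulus, this, Real.sSup_empty] at hδ
    exact lt_irrefl 0 hδ
  obtain ⟨δ₀, hδ₀, -⟩ := hset
  have hbdd : BddAbove {δ : ℝ | 0 < δ ∧ ∀ x y : E, ‖x - y‖ ≤ δ → |f x - f y| ≤ ε} := by
    by_contra h
    rw [hδdef, invModulus, Real.sSup_of_not_bddAbove h] at hδ
    exact lt_irrefl 0 hδ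
  have hne : {δ : ℝ | 0 < δ ∧ ∀ x y : E, ‖x - y‖ ≤ δ → |f x - f y| ≤ ε}.Nonempty := ⟨δ₀, hδ₀⟩
  -- bounds on f via sup and inf
  have hbA : BddAbove (Set.range f) := ⟨C, by rintro _ ⟨y, rfl⟩; exact (abs_le.mp (hC y)).2⟩
  have hbB : BddBelow (Set.range f) := ⟨-C, by rintro _ ⟨y, rfl⟩; exact (abs_le.mp (hC y)).1⟩
  have hvar : ∀ u v : E, f u - f v ≤ varF f := by
    intro u v
    have h1 : f u ≤ ⨆ y : E, f y := le_ciSup hbA u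
    have h2 : ⨅ y : E, f y ≤ f v := ciInf_le hbB v
    simp only [varF]; linarith
  have hvar0 : 0 ≤ varF f := by have := hvar x x; linarith
  set b := varF f / δ with hb
  have hb0 : 0 ≤ b := div_nonneg hvar0 hδ.le
  -- every element of the Hopf-Lax set is ≤ f x + ε
  have key : ∀ y ∈ {y : ℝ | ∃ a : E, c a ≠ ⊤ ∧ y = f (x + a) - (c a).toReal},
      y ≤ f x + ε := by
    rintro y ⟨a, hca, rfl⟩
    rcases lt_or_ge ‖a‖ δ with hlt | hge
    · -- small a : use uniform continuity bound
      obtain ⟨δ', ⟨hδ'pos, hδ'⟩, hlt'⟩ := (lt_csSup_iff hbdd hne).mp hlt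
      have : |f (x + a) - f x| ≤ ε := by
        apply hδ'
        simpa using hlt'.le
      have h1 : f (x + a) - f x ≤ ε := (abs_le.mp this).2
      have h2 : 0 ≤ (c a).toReal := ENNReal.toReal_nonneg
      linarith
    · -- large a : use the conjugate bound
      have hle : (((b * ‖a‖ : ℝ) : EReal) - ((c a : ℝ≥0∞) : EReal)) ≤ (ε : EReal) :=
        le_trans (le_iSup (fun a : E => (((b * ‖a‖ : ℝ) : EReal) - ((c a : ℝ≥0∞) : EReal))) a)
          hcond
      have hcoe : ((c a : ℝ≥0∞) : EReal) = (((c a).toReal : ℝ) : EReal) := by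
        rw [← EReal.toReal_coe_ennreal, EReal.coe_toReal (by simpa using hca) (by simp)]
      rw [hcoe, ← EReal.coe_sub, EReal.coe_le_coe_iff] at hle
      have h1 : f (x + a) - f x ≤ varF f := hvar (x + a) x
      have h2 : varF f ≤ b * ‖a‖ := by
        have : varF f = b * δ := by rw [hb, div_mul_cancel₀ _ hδ.ne']
        rw [this]
        exact mul_le_mul_of_nonneg_left hge hb0
      linarith
  have hmem : f x ∈ {y : ℝ | ∃ a : E, c a ≠ ⊤ ∧ y = f (x + a) - (c a).toReal} := by
    exact ⟨0, by simp [hc0]⟩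
  have : hopfLax c f x ≤ f x + ε := csSup_le ⟨f x, hmem⟩ key
  linarith
end

section
/- Let E be a Banach space and c : E → [0, ∞] convex with c(0) = 0. For t > 0 define the Hopf-Lax semigroup (Φ_t f)(x) := sup_{a ∈ E}(f(x + a) − t·c(a/t)) on bounded uniformly continuous functions, and Φ_0 f := f. Then (Φ_t)_{t ≥ 0} is a semigroup: Φ_{s+t} f = Φ_s(Φ_t f) for all s, t ≥ 0 and all bounded uniformly continuous f : E → ℝ. -/
open scoped ENNReal

/-- The Hopf-Lax semigroup `(Φ_t f)(x) = sup_a (f(x+a) − t c(a/t))` for `t > 0`,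
with `Φ_0 f = f`. -/
noncomputable def hopfLaxT {E : Type*} [NormedAddCommGroup E] [NormedSpace ℝ E]
    (c : E → ℝ≥0∞) (t : ℝ) (f : E → ℝ) : E → ℝ :=
  if t = 0 then f else hopfLax (fun a => ENNReal.ofReal t * c (t⁻¹ • a)) f

/-- the semigroup property `Φ_{s+t} f = Φ_s (Φ_t f)`. -/
theorem hopfLaxT_semigroup {E : Type*} [NormedAddCommGroup E] [NormedSpace ℝ E]
    [CompleteSpace E]
    (c : E → ℝ≥0∞) (hc0 : c 0 = 0)
    (hconv : ∀ x y : E, ∀ l : ℝ, 0 ≤ l → l ≤ 1 →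
      c (l • x + (1 - l) • y) ≤ ENNReal.ofReal l * c x + ENNReal.ofReal (1 - l) * c y)
    (hsl : ∀ M : ℝ, ∃ R : ℝ, ∀ a : E, R ≤ ‖a‖ → ENNReal.ofReal (M * ‖a‖) ≤ c a)
    (s t : ℝ) (hs : 0 ≤ s) (ht : 0 ≤ t)
    (f : E → ℝ) (hfb : ∃ C, ∀ x, |f x| ≤ C) (hfu : UniformContinuous f) :
    hopfLaxT c (s + t) f = hopfLaxT c s (hopfLaxT c t f) := by
  rcases eq_or_lt_of_le ht with rfl | ht'
  · simp [hopfLaxT]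
  rcases eq_or_lt_of_le hs with rfl | hs'
  · simp [hopfLaxT]
  have hst : (0:ℝ) < s + t := by linarith
  obtain ⟨C, hC⟩ := hfb
  -- the defining set at time τ for function h at point x
  set S : ℝ → (E → ℝ) → E → Set ℝ := fun τ h x =>
    {y : ℝ | ∃ a : E, (ENNReal.ofReal τ * c (τ⁻¹ • a)) ≠ ⊤ ∧
      y = h (x + a) - (ENNReal.ofReal τ * c (τ⁻¹ • a)).toReal} with hS
  have hmem0 : ∀ (τ : ℝ) (h : E → ℝ) (x : E), h x ∈ S τ h x := by
    intro τ h x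
    exact ⟨0, by simp [hc0], by simp [hc0]⟩
  have hub : ∀ (τ : ℝ) (h : E → ℝ) (D : ℝ), (∀ z, |h z| ≤ D) → ∀ x : E,
      ∀ y ∈ S τ h x, y ≤ D := by
    rintro τ h D hD x y ⟨a, ha, rfl⟩
    have h1 := (abs_le.1 (hD (x + a))).2
    have h2 : 0 ≤ (ENNReal.ofReal τ * c (τ⁻¹ • a)).toReal := ENNReal.toReal_nonneg
    linarith
  have hbdd : ∀ (τ : ℝ) (h : E → ℝ) (D : ℝ), (∀ z, |h z| ≤ D) → ∀ x : E,
      BddAbove (S τ h x) := fun τ h D hD x => ⟨D, fun y hy => hub τ h D hD x y hy⟩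
  -- unfolding lemma
  have hdef : ∀ (τ : ℝ), τ ≠ 0 → ∀ (h : E → ℝ) (x : E),
      hopfLaxT c τ h x = sSup (S τ h x) := by
    intro τ hτ h x
    rw [hopfLaxT, if_neg hτ]
    rfl
  -- boundedness of hopfLaxT c t f
  have hgb : ∀ z, |hopfLaxT c t f z| ≤ C := by
    intro z
    rw [hdef t ht'.ne' f z, abs_le]
    constructor
    · have h1 : -C ≤ f z := (abs_le.1 (hC z)).1
      exact h1.trans (le_csSup (hbdd t f C hC z) (hmem0 t f z))
    · exact csSup_le ⟨_, hmem0 t f z⟩ (hub t f C hC z)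
  funext x
  rw [hdef (s+t) hst.ne' f x, hdef s hs'.ne' (hopfLaxT c t f) x]
  apply le_antisymm
  · refine csSup_le ⟨_, hmem0 (s+t) f x⟩ ?_
    rintro y ⟨a, ha, rfl⟩
    set a₁ := (s / (s + t)) • a with ha₁
    set a₂ := (t / (s + t)) • a with ha₂
    have e1 : s⁻¹ • a₁ = (s + t)⁻¹ • a := by
      rw [ha₁, smul_smul]
      congr 1
      field_simp
    have e2 : t⁻¹ • a₂ = (s + t)⁻¹ • a := by
      rw [ha₂, smul_smul]
      congr 1
      field_simp
    have e3 : a₁ + a₂ = a := by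
      rw [ha₁, ha₂, ← add_smul]
      have : s / (s + t) + t / (s + t) = 1 := by field_simp
      rw [this, one_smul]
    have hsplit : ENNReal.ofReal (s + t) * c ((s + t)⁻¹ • a)
        = ENNReal.ofReal s * c (s⁻¹ • a₁) + ENNReal.ofReal t * c (t⁻¹ • a₂) := by
      rw [e1, e2, ← add_mul, ← ENNReal.ofReal_add hs ht]
    have hsum : ENNReal.ofReal s * c (s⁻¹ • a₁) + ENNReal.ofReal t * c (t⁻¹ • a₂) ≠ ⊤ := by
      rw [← hsplit]; exact ha
    have h1 : ENNReal.ofReal s * c (s⁻¹ • a₁) ≠ ⊤ := (ENNReal.add_ne_top.1 hsum).1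
    have h2 : ENNReal.ofReal t * c (t⁻¹ • a₂) ≠ ⊤ := (ENNReal.add_ne_top.1 hsum).2
    have htr : (ENNReal.ofReal (s + t) * c ((s + t)⁻¹ • a)).toReal
        = (ENNReal.ofReal s * c (s⁻¹ • a₁)).toReal + (ENNReal.ofReal t * c (t⁻¹ • a₂)).toReal := by
      rw [hsplit, ENNReal.toReal_add h1 h2]
    have hx : x + a = x + a₁ + a₂ := by rw [add_assoc, e3]
    have step1 : f (x + a₁ + a₂) - (ENNReal.ofReal t * c (t⁻¹ • a₂)).toReal
        ≤ hopfLaxT c t f (x + a₁) := by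
      rw [hdef t ht'.ne' f (x + a₁)]
      exact le_csSup (hbdd t f C hC (x + a₁)) ⟨a₂, h2, rfl⟩
    have step2 : hopfLaxT c t f (x + a₁) - (ENNReal.ofReal s * c (s⁻¹ • a₁)).toReal
        ≤ sSup (S s (hopfLaxT c t f) x) :=
      le_csSup (hbdd s (hopfLaxT c t f) C hgb x) ⟨a₁, h1, rfl⟩
    rw [hx, htr]
    linarith
  · refine csSup_le ⟨_, hmem0 s (hopfLaxT c t f) x⟩ ?_
    rintro y ⟨a₁, h1, rfl⟩
    rw [sub_le_iff_le_add, hdef t ht'.ne' f (x + a₁)]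
    refine csSup_le ⟨_, hmem0 t f (x + a₁)⟩ ?_
    rintro z ⟨a₂, h2, rfl⟩
    -- key convexity inequality
    have hkey : ENNReal.ofReal (s + t) * c ((s + t)⁻¹ • (a₁ + a₂))
        ≤ ENNReal.ofReal s * c (s⁻¹ • a₁) + ENNReal.ofReal t * c (t⁻¹ • a₂) := by
      have hl0 : 0 ≤ s / (s + t) := by positivity
      have hl1 : s / (s + t) ≤ 1 := by
        rw [div_le_one hst]; linarith
      have hconv' := hconv (s⁻¹ • a₁) (t⁻¹ • a₂) (s / (s + t)) hl0 hl1
      have hl2 : 1 - s / (s + t) = t / (s + t) := by field_simp; ring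
      have harg : (s / (s + t)) • s⁻¹ • a₁ + (1 - s / (s + t)) • t⁻¹ • a₂
          = (s + t)⁻¹ • (a₁ + a₂) := by
        rw [hl2, smul_smul, smul_smul, smul_add]
        congr 1 <;> congr 1 <;> field_simp <;> ring
      rw [harg] at hconv'
      calc ENNReal.ofReal (s + t) * c ((s + t)⁻¹ • (a₁ + a₂))
          ≤ ENNReal.ofReal (s + t) * (ENNReal.ofReal (s / (s + t)) * c (s⁻¹ • a₁)
            + ENNReal.ofReal (1 - s / (s + t)) * c (t⁻¹ • a₂)) :=
            mul_le_mul_right hconv' _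
        _ = ENNReal.ofReal s * c (s⁻¹ • a₁) + ENNReal.ofReal t * c (t⁻¹ • a₂) := by
            rw [mul_add, ← mul_assoc, ← mul_assoc,
              ← ENNReal.ofReal_mul hst.le, ← ENNReal.ofReal_mul hst.le]
            congr 3
            · field_simp
            · rw [hl2]; field_simp
    have hsum : ENNReal.ofReal s * c (s⁻¹ • a₁) + ENNReal.ofReal t * c (t⁻¹ • a₂) ≠ ⊤ :=
      ENNReal.add_ne_top.2 ⟨h1, h2⟩
    have hfinA : ENNReal.ofReal (s + t) * c ((s + t)⁻¹ • (a₁ + a₂)) ≠ ⊤ :=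
      ne_top_of_le_ne_top hsum hkey
    have htr : (ENNReal.ofReal (s + t) * c ((s + t)⁻¹ • (a₁ + a₂))).toReal
        ≤ (ENNReal.ofReal s * c (s⁻¹ • a₁)).toReal + (ENNReal.ofReal t * c (t⁻¹ • a₂)).toReal := by
      rw [← ENNReal.toReal_add h1 h2]
      exact ENNReal.toReal_mono hsum hkey
    have memA : f (x + (a₁ + a₂)) - (ENNReal.ofReal (s + t) * c ((s + t)⁻¹ • (a₁ + a₂))).toReal
        ∈ S (s + t) f x := ⟨a₁ + a₂, hfinA, rfl⟩
    have hle : f (x + (a₁ + a₂)) - (ENNReal.ofReal (s + t) * c ((s + t)⁻¹ • (a₁ + a₂))).toReal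
        ≤ sSup (S (s + t) f x) := le_csSup (hbdd (s + t) f C hC x) memA
    have hx : x + a₁ + a₂ = x + (a₁ + a₂) := by rw [add_assoc]
    rw [hx]
    linarith
end

section
/- Let E be a separable Banach space, c : E → [0, ∞] convex with c(0) = 0, (μ_t)_{t>0} a convolution semigroup of Borel probability measures on E (μ_{s+t} = μ_s * μ_t), and define for t > 0: (J_t f) := Φ_t(μ_t f) and (I_t f) := μ_t(Φ_t f), where (μ_t f)(x) = ∫ f(x+y) dμ_t(y) and (Φ_t f)(x) = sup_a(f(x+a) − t c(a/t)). Then for all s, t > 0 and bounded uniformly continuous f: J_{s+t} f ≤ J_s(J_t f) and I_s(I_t f) ≤ I_{s+t} f pointwise. -/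
open MeasureTheory
open scoped ENNReal

/-- The translation-convolution operator `(μ f)(x) = ∫ f(x+y) dμ(y)`. -/
noncomputable def muOp {E : Type*} [NormedAddCommGroup E] [NormedSpace ℝ E]
    [MeasurableSpace E] (μ : Measure E) (f : E → ℝ) (x : E) : ℝ :=
  ∫ y, f (x + y) ∂μ

/-- `J_t f = Φ_t (μ_t f)`. -/
noncomputable def jOp {E : Type*} [NormedAddCommGroup E] [NormedSpace ℝ E]
    [MeasurableSpace E] (c : E → ℝ≥0∞) (μ : ℝ → Measure E) (t : ℝ) (f : E → ℝ) : E → ℝ :=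
  hopfLaxT c t (muOp (μ t) f)

/-- `I_t f = μ_t (Φ_t f)`. -/
noncomputable def iOp {E : Type*} [NormedAddCommGroup E] [NormedSpace ℝ E]
    [MeasurableSpace E] (c : E → ℝ≥0∞) (μ : ℝ → Measure E) (t : ℝ) (f : E → ℝ) : E → ℝ :=
  muOp (μ t) (hopfLaxT c t f)

section HLAux

variable {E : Type*} [NormedAddCommGroup E] [NormedSpace ℝ E]

lemma hopfLax_bddAbove (c' : E → ℝ≥0∞) {f : E → ℝ} {C : ℝ} (hf : ∀ x, |f x| ≤ C) (x : E) :
    BddAbove {y : ℝ | ∃ a : E, c' a ≠ ⊤ ∧ y = f (x + a) - (c' a).toReal} := by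
  refine ⟨C, ?_⟩
  rintro y ⟨a, ha, rfl⟩
  have h1 := (abs_le.1 (hf (x + a))).2
  have h2 : (0:ℝ) ≤ (c' a).toReal := ENNReal.toReal_nonneg
  linarith

lemma le_hopfLax (c' : E → ℝ≥0∞) {f : E → ℝ} {C : ℝ} (hf : ∀ x, |f x| ≤ C)
    (x : E) {a : E} (ha : c' a ≠ ⊤) :
    f (x + a) - (c' a).toReal ≤ hopfLax c' f x :=
  le_csSup (hopfLax_bddAbove c' hf x) ⟨a, ha, rfl⟩

lemma hopfLax_le (c' : E → ℝ≥0∞) (h0 : c' 0 ≠ ⊤) {f : E → ℝ} {M : ℝ} (x : E)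
    (h : ∀ a : E, c' a ≠ ⊤ → f (x + a) - (c' a).toReal ≤ M) :
    hopfLax c' f x ≤ M :=
  csSup_le ⟨_, ⟨0, h0, rfl⟩⟩ (by rintro y ⟨a, ha, rfl⟩; exact h a ha)

lemma abs_hopfLax_le (c' : E → ℝ≥0∞) (h0 : c' 0 = 0) {f : E → ℝ} {C : ℝ}
    (hf : ∀ x, |f x| ≤ C) (x : E) : |hopfLax c' f x| ≤ C := by
  have h0' : c' 0 ≠ ⊤ := by simp [h0]
  rw [abs_le]
  constructor
  · have h1 := le_hopfLax c' hf x (a := 0) h0'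
    rw [h0] at h1
    simp only [add_zero, ENNReal.toReal_zero, sub_zero] at h1
    have h2 := (abs_le.1 (hf x)).1
    linarith
  · exact hopfLax_le c' h0' x fun a ha => by
      have h1 := (abs_le.1 (hf (x + a))).2
      have h2 : (0:ℝ) ≤ (c' a).toReal := ENNReal.toReal_nonneg
      linarith

lemma hopfLax_mono (c' : E → ℝ≥0∞) (h0 : c' 0 ≠ ⊤) {f g : E → ℝ} {C : ℝ}
    (hg : ∀ x, |g x| ≤ C) (hfg : ∀ x, f x ≤ g x) (x : E) :
    hopfLax c' f x ≤ hopfLax c' g x :=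
  hopfLax_le c' h0 x fun a ha =>
    (sub_le_sub_right (hfg _) _).trans (le_hopfLax c' hg x ha)

lemma hopfLax_uc (c' : E → ℝ≥0∞) (h0 : c' 0 ≠ ⊤) {f : E → ℝ} {C : ℝ}
    (hf : ∀ x, |f x| ≤ C) (hfu : UniformContinuous f) :
    UniformContinuous (hopfLax c' f) := by
  rw [Metric.uniformContinuous_iff] at hfu ⊢
  intro ε hε
  obtain ⟨δ, hδ, hδ'⟩ := hfu (ε/2) (by linarith)
  refine ⟨δ, hδ, ?_⟩
  intro x x' hxx'
  have key : ∀ u v : E, dist u v < δ → hopfLax c' f u ≤ hopfLax c' f v + ε/2 := by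
    intro u v huv
    refine hopfLax_le c' h0 u fun a ha => ?_
    have hd : dist (u + a) (v + a) < δ := by rwa [dist_add_right]
    have h1 := le_of_lt (hδ' hd)
    rw [Real.dist_eq, abs_le] at h1
    have h2 := le_hopfLax c' hf v (a := a) ha
    linarith [h1.1, h1.2]
  have k1 := key x x' hxx'
  have k2 := key x' x (by rwa [dist_comm])
  rw [Real.dist_eq, abs_lt]
  constructor <;> linarith

variable (c : E → ℝ≥0∞)

lemma hopfLaxT_pos {t : ℝ} (ht : 0 < t) (f : E → ℝ) :
    hopfLaxT c t f = hopfLax (fun a => ENNReal.ofReal t * c (t⁻¹ • a)) f := by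
  simp [hopfLaxT, ht.ne']

lemma ct_zero (hc0 : c 0 = 0) (t : ℝ) :
    (fun a : E => ENNReal.ofReal t * c (t⁻¹ • a)) 0 ≠ ⊤ := by
  simp [hc0]

lemma ct_fin (hc0 : c 0 = 0) {t : ℝ} (ht : 0 < t) {a : E}
    (ha : ENNReal.ofReal t * c (t⁻¹ • a) ≠ ⊤) : c (t⁻¹ • a) ≠ ⊤ := by
  intro h
  exact ha (by rw [h, ENNReal.mul_top (ENNReal.ofReal_pos.2 ht).ne'])

lemma abs_hopfLaxT_le (hc0 : c 0 = 0) {t : ℝ} (ht : 0 < t) {f : E → ℝ} {C : ℝ}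
    (hf : ∀ x, |f x| ≤ C) (x : E) : |hopfLaxT c t f x| ≤ C := by
  rw [hopfLaxT_pos c ht]
  exact abs_hopfLax_le _ (by simp [hc0]) hf x

lemma hopfLaxT_uc (hc0 : c 0 = 0) {t : ℝ} (ht : 0 < t) {f : E → ℝ} {C : ℝ}
    (hf : ∀ x, |f x| ≤ C) (hfu : UniformContinuous f) :
    UniformContinuous (hopfLaxT c t f) := by
  rw [hopfLaxT_pos c ht]
  exact hopfLax_uc _ (ct_zero c hc0 t) hf hfu

lemma hopfLaxT_mono (hc0 : c 0 = 0) {t : ℝ} (ht : 0 < t) {f g : E → ℝ} {C : ℝ}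
    (hg : ∀ x, |g x| ≤ C) (hfg : ∀ x, f x ≤ g x) (x : E) :
    hopfLaxT c t f x ≤ hopfLaxT c t g x := by
  rw [hopfLaxT_pos c ht, hopfLaxT_pos c ht]
  exact hopfLax_mono _ (ct_zero c hc0 t) hg hfg x

/-- Splitting: `Φ_{s+t} f ≤ Φ_s (Φ_t f)` (no convexity needed). -/
lemma hopfLaxT_split (hc0 : c 0 = 0) {s t : ℝ} (hs : 0 < s) (ht : 0 < t)
    {f : E → ℝ} {C : ℝ} (hf : ∀ x, |f x| ≤ C) (x : E) :
    hopfLaxT c (s + t) f x ≤ hopfLaxT c s (hopfLaxT c t f) x := by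
  have hu : 0 < s + t := by linarith
  have hΦt : ∀ y, |hopfLaxT c t f y| ≤ C := abs_hopfLaxT_le c hc0 ht hf
  rw [hopfLaxT_pos c hu, hopfLaxT_pos c hs]
  refine hopfLax_le _ (ct_zero c hc0 (s+t)) x fun a ha => ?_
  have hfin : c ((s+t)⁻¹ • a) ≠ ⊤ := ct_fin c hc0 hu ha
  have hb : s⁻¹ • ((s/(s+t)) • a) = (s+t)⁻¹ • a := by
    rw [smul_smul]; congr 1; field_simp
  have ha' : t⁻¹ • ((t/(s+t)) • a) = (s+t)⁻¹ • a := by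
    rw [smul_smul]; congr 1; field_simp
  have hba : (s/(s+t)) • a + (t/(s+t)) • a = a := by
    rw [← add_smul, ← add_div, div_self hu.ne', one_smul]
  set K := (c ((s+t)⁻¹ • a)).toReal with hK
  have step1 : f ((x + (s/(s+t)) • a) + (t/(s+t)) • a) - t * K ≤
      hopfLaxT c t f (x + (s/(s+t)) • a) := by
    rw [hopfLaxT_pos c ht]
    have hfin' : ENNReal.ofReal t * c (t⁻¹ • ((t/(s+t)) • a)) ≠ ⊤ := by
      rw [ha']; exact ENNReal.mul_ne_top ENNReal.ofReal_ne_top hfin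
    have h := le_hopfLax (fun a => ENNReal.ofReal t * c (t⁻¹ • a)) hf
      (x + (s/(s+t)) • a) (a := (t/(s+t)) • a) hfin'
    rwa [ENNReal.toReal_mul, ENNReal.toReal_ofReal ht.le, ha'] at h
  have step2 : hopfLaxT c t f (x + (s/(s+t)) • a) - s * K ≤
      hopfLax (fun a => ENNReal.ofReal s * c (s⁻¹ • a)) (hopfLaxT c t f) x := by
    have hfin' : ENNReal.ofReal s * c (s⁻¹ • ((s/(s+t)) • a)) ≠ ⊤ := by
      rw [hb]; exact ENNReal.mul_ne_top ENNReal.ofReal_ne_top hfin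
    have h := le_hopfLax (fun a => ENNReal.ofReal s * c (s⁻¹ • a)) hΦt x
      (a := (s/(s+t)) • a) hfin'
    rwa [ENNReal.toReal_mul, ENNReal.toReal_ofReal hs.le, hb] at h
  rw [ENNReal.toReal_mul, ENNReal.toReal_ofReal hu.le, ← hK]
  have hxa : x + a = (x + (s/(s+t)) • a) + (t/(s+t)) • a := by
    rw [add_assoc, hba]
  rw [hxa]
  have : (s + t) * K = s * K + t * K := by ring
  linarith

/-- Merging: `Φ_s (Φ_t f) ≤ Φ_{s+t} f` (uses convexity of `c`). -/
lemma hopfLaxT_merge (hc0 : c 0 = 0)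
    (hconv : ∀ x y : E, ∀ l : ℝ, 0 ≤ l → l ≤ 1 →
      c (l • x + (1 - l) • y) ≤ ENNReal.ofReal l * c x + ENNReal.ofReal (1 - l) * c y)
    {s t : ℝ} (hs : 0 < s) (ht : 0 < t)
    {f : E → ℝ} {C : ℝ} (hf : ∀ x, |f x| ≤ C) (x : E) :
    hopfLaxT c s (hopfLaxT c t f) x ≤ hopfLaxT c (s + t) f x := by
  have hu : 0 < s + t := by linarith
  rw [hopfLaxT_pos c hu, hopfLaxT_pos c hs, hopfLaxT_pos c ht]
  have hΦt : ∀ y, |hopfLax (fun a => ENNReal.ofReal t * c (t⁻¹ • a)) f y| ≤ C :=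
    abs_hopfLax_le _ (by simp [hc0]) hf
  refine hopfLax_le _ (ct_zero c hc0 s) x fun b hb => ?_
  rw [sub_le_iff_le_add]
  refine hopfLax_le _ (ct_zero c hc0 t) (x + b) fun a ha => ?_
  have hcb : c (s⁻¹ • b) ≠ ⊤ := ct_fin c hc0 hs hb
  have hca : c (t⁻¹ • a) ≠ ⊤ := ct_fin c hc0 ht ha
  set l := s / (s + t) with hl
  have hl0 : 0 ≤ l := by positivity
  have hl1 : l ≤ 1 := by rw [hl, div_le_one hu]; linarith
  have h1l : 1 - l = t / (s + t) := by rw [hl]; field_simp; ring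
  have hkey := hconv (s⁻¹ • b) (t⁻¹ • a) l hl0 hl1
  have harg : l • (s⁻¹ • b) + (1 - l) • (t⁻¹ • a) = (s+t)⁻¹ • (b + a) := by
    rw [h1l, smul_smul, smul_smul]
    have e1 : l * s⁻¹ = (s+t)⁻¹ := by rw [hl]; field_simp
    have e2 : t / (s+t) * t⁻¹ = (s+t)⁻¹ := by field_simp
    rw [e1, e2, ← smul_add]
  rw [harg] at hkey
  have hmul : ENNReal.ofReal (s+t) * c ((s+t)⁻¹ • (b + a)) ≤
      ENNReal.ofReal s * c (s⁻¹ • b) + ENNReal.ofReal t * c (t⁻¹ • a) := by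
    calc ENNReal.ofReal (s+t) * c ((s+t)⁻¹ • (b + a))
        ≤ ENNReal.ofReal (s+t) * (ENNReal.ofReal l * c (s⁻¹ • b)
            + ENNReal.ofReal (1-l) * c (t⁻¹ • a)) := mul_le_mul_right hkey _
      _ = (ENNReal.ofReal (s+t) * ENNReal.ofReal l) * c (s⁻¹ • b)
            + (ENNReal.ofReal (s+t) * ENNReal.ofReal (1-l)) * c (t⁻¹ • a) := by ring
      _ = ENNReal.ofReal s * c (s⁻¹ • b) + ENNReal.ofReal t * c (t⁻¹ • a) := by
          rw [← ENNReal.ofReal_mul hu.le, ← ENNReal.ofReal_mul hu.le]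
          congr 2
          · rw [hl]; field_simp
          · rw [h1l]; field_simp
  have hfinR : ENNReal.ofReal s * c (s⁻¹ • b) + ENNReal.ofReal t * c (t⁻¹ • a) ≠ ⊤ :=
    ENNReal.add_ne_top.2 ⟨ENNReal.mul_ne_top ENNReal.ofReal_ne_top hcb,
      ENNReal.mul_ne_top ENNReal.ofReal_ne_top hca⟩
  have hfinL : ENNReal.ofReal (s+t) * c ((s+t)⁻¹ • (b + a)) ≠ ⊤ :=
    fun h => hfinR (top_le_iff.1 (h ▸ hmul))
  have htr := (ENNReal.toReal_le_toReal hfinL hfinR).2 hmul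
  rw [ENNReal.toReal_add (ENNReal.mul_ne_top ENNReal.ofReal_ne_top hcb)
      (ENNReal.mul_ne_top ENNReal.ofReal_ne_top hca),
    ENNReal.toReal_mul, ENNReal.toReal_mul, ENNReal.toReal_mul,
    ENNReal.toReal_ofReal hs.le, ENNReal.toReal_ofReal ht.le,
    ENNReal.toReal_ofReal hu.le] at htr
  have h3 := le_hopfLax (fun a => ENNReal.ofReal (s+t) * c ((s+t)⁻¹ • a)) hf x
    (a := b + a) hfinL
  rw [ENNReal.toReal_mul, ENNReal.toReal_ofReal hu.le] at h3
  rw [ENNReal.toReal_mul, ENNReal.toReal_mul, ENNReal.toReal_ofReal hs.le,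
    ENNReal.toReal_ofReal ht.le, add_assoc x b a]
  linarith

end HLAux

section MeasAux

variable {E : Type*} [NormedAddCommGroup E] [NormedSpace ℝ E]
  [MeasurableSpace E] [OpensMeasurableSpace E]

lemma integrable_translate (μ : Measure E) [IsFiniteMeasure μ] {f : E → ℝ} {C : ℝ}
    (hf : ∀ x, |f x| ≤ C) (hfc : Continuous f) (x : E) :
    Integrable (fun y => f (x + y)) μ :=
  Integrable.mono' (integrable_const C)
    ((hfc.comp (continuous_const.add continuous_id)).aestronglyMeasurable)
    (ae_of_all _ fun y => by simpa [Real.norm_eq_abs] using hf (x + y))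

lemma abs_muOp_le (μ : Measure E) [IsProbabilityMeasure μ] {f : E → ℝ} {C : ℝ}
    (hf : ∀ x, |f x| ≤ C) (x : E) : |muOp μ f x| ≤ C := by
  have h := norm_integral_le_of_norm_le_const (μ := μ) (f := fun y => f (x + y)) (C := C)
    (ae_of_all _ fun y => by simpa [Real.norm_eq_abs] using hf (x + y))
  simpa [muOp, Real.norm_eq_abs, measure_univ] using h

lemma muOp_uc (μ : Measure E) [IsProbabilityMeasure μ] {f : E → ℝ} {C : ℝ}
    (hf : ∀ x, |f x| ≤ C) (hfu : UniformContinuous f) :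
    UniformContinuous (muOp μ f) := by
  have hfc := hfu.continuous
  rw [Metric.uniformContinuous_iff] at hfu ⊢
  intro ε hε
  obtain ⟨δ, hδ, hδ'⟩ := hfu (ε/2) (by linarith)
  refine ⟨δ, hδ, ?_⟩
  intro x x' h
  have hint : ∀ z : E, Integrable (fun y => f (z + y)) μ :=
    integrable_translate μ hf hfc
  have hsub : muOp μ f x - muOp μ f x' = ∫ y, (f (x + y) - f (x' + y)) ∂μ :=
    (integral_sub (hint x) (hint x')).symm
  rw [Real.dist_eq, hsub]
  calc |∫ y, (f (x + y) - f (x' + y)) ∂μ| ≤ (ε/2) * (μ Set.univ).toReal := by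
        rw [← Real.norm_eq_abs]
        refine norm_integral_le_of_norm_le_const (ae_of_all _ fun y => ?_)
        rw [Real.norm_eq_abs, ← Real.dist_eq]
        exact le_of_lt (hδ' (by rwa [dist_add_right]))
    _ < ε := by
        rw [measure_univ, ENNReal.toReal_one, mul_one]; linarith

lemma muOp_mono (μ : Measure E) [IsFiniteMeasure μ] {f g : E → ℝ} {Cf Cg : ℝ}
    (hf : ∀ x, |f x| ≤ Cf) (hfc : Continuous f) (hg : ∀ x, |g x| ≤ Cg) (hgc : Continuous g)
    (hfg : ∀ x, f x ≤ g x) (x : E) : muOp μ f x ≤ muOp μ g x :=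
  integral_mono (integrable_translate μ hf hfc x) (integrable_translate μ hg hgc x)
    fun _ => hfg _

end MeasAux

section MeasAux2

variable {E : Type*} [NormedAddCommGroup E] [NormedSpace ℝ E]
  [TopologicalSpace.SeparableSpace E] [MeasurableSpace E] [BorelSpace E]

/-- Convolution identity: `μ_{s+t} f = μ_s (μ_t f)`. -/
lemma muOp_conv {μ ν ρ : Measure E} [IsProbabilityMeasure μ] [IsProbabilityMeasure ν]
    (hρ : ρ = Measure.map (fun p : E × E => p.1 + p.2) (μ.prod ν))
    {g : E → ℝ} {C : ℝ} (hg : ∀ x, |g x| ≤ C) (hgc : Continuous g) (x : E) :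
    muOp ρ g x = muOp μ (muOp ν g) x := by
  haveI : SecondCountableTopology E := UniformSpace.secondCountable_of_separable E
  subst hρ
  have hsm : AEStronglyMeasurable (fun y => g (x + y))
      (Measure.map (fun p : E × E => p.1 + p.2) (μ.prod ν)) :=
    (hgc.comp (continuous_const.add continuous_id)).aestronglyMeasurable
  rw [muOp, integral_map measurable_add.aemeasurable hsm]
  have hint : Integrable (fun p : E × E => g (x + (p.1 + p.2))) (μ.prod ν) :=
    Integrable.mono' (integrable_const C)
      ((hgc.comp (continuous_const.add (continuous_fst.add continuous_snd))).aestronglyMeasurable)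
      (ae_of_all _ fun p => by simpa [Real.norm_eq_abs] using hg (x + (p.1 + p.2)))
  show ∫ p : E × E, g (x + (p.1 + p.2)) ∂(μ.prod ν) = muOp μ (muOp ν g) x
  rw [integral_prod _ hint]
  refine integral_congr_ae (ae_of_all _ fun y => ?_)
  refine integral_congr_ae (ae_of_all _ fun z => ?_)
  show g (x + (y + z)) = g (x + y + z)
  rw [add_assoc]

/-- Exchange: `Φ_t (μ g) ≤ μ (Φ_t g)`. -/
lemma hopfLaxT_muOp_le (c : E → ℝ≥0∞) (hc0 : c 0 = 0) {t : ℝ} (ht : 0 < t)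
    (μ : Measure E) [IsProbabilityMeasure μ] {g : E → ℝ} {C : ℝ}
    (hg : ∀ x, |g x| ≤ C) (hgu : UniformContinuous g) (x : E) :
    hopfLaxT c t (muOp μ g) x ≤ muOp μ (hopfLaxT c t g) x := by
  have hΦb : ∀ y, |hopfLaxT c t g y| ≤ C := abs_hopfLaxT_le c hc0 ht hg
  have hΦc : Continuous (hopfLaxT c t g) := (hopfLaxT_uc c hc0 ht hg hgu).continuous
  rw [hopfLaxT_pos c ht]
  refine hopfLax_le _ (ct_zero c hc0 t) x fun a ha => ?_
  set κ := (ENNReal.ofReal t * c (t⁻¹ • a)).toReal with hκ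
  have key : ∀ y : E, g (x + y + a) - κ ≤ hopfLaxT c t g (x + y) := by
    intro y
    rw [hopfLaxT_pos c ht]
    exact le_hopfLax (fun a => ENNReal.ofReal t * c (t⁻¹ • a)) hg (x + y) ha
  have hint : Integrable (fun y => g (x + y + a)) μ := by
    refine (integrable_translate μ hg hgu.continuous (x + a)).congr (ae_of_all _ fun y => ?_)
    show g (x + a + y) = g (x + y + a)
    rw [add_right_comm]
  calc muOp μ g (x + a) - κ
      = ∫ y, g (x + y + a) ∂μ - κ := by
        rw [muOp]
        congr 1
        refine integral_congr_ae (ae_of_all _ fun y => ?_)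
        show g (x + a + y) = g (x + y + a)
        rw [add_right_comm]
    _ = ∫ y, (g (x + y + a) - κ) ∂μ := by
        rw [integral_sub hint (integrable_const _), integral_const, probReal_univ,
          one_smul]
    _ ≤ ∫ y, hopfLaxT c t g (x + y) ∂μ :=
        integral_mono (hint.sub (integrable_const _))
          (integrable_translate μ hΦb hΦc x) fun y => key y
    _ = muOp μ (hopfLaxT c t g) x := rfl

end MeasAux2

/-- for a convolution semigroup `(μ_t)`, the inequalities
`J_{s+t} f ≤ J_s (J_t f)` and `I_s (I_t f) ≤ I_{s+t} f`. -/
theorem jOp_iOp_semigroup_ineq {E : Type*} [NormedAddCommGroup E] [NormedSpace ℝ E]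
    [CompleteSpace E] [TopologicalSpace.SeparableSpace E]
    [MeasurableSpace E] [BorelSpace E]
    (c : E → ℝ≥0∞) (hc0 : c 0 = 0)
    (hconv : ∀ x y : E, ∀ l : ℝ, 0 ≤ l → l ≤ 1 →
      c (l • x + (1 - l) • y) ≤ ENNReal.ofReal l * c x + ENNReal.ofReal (1 - l) * c y)
    (hsl : ∀ M : ℝ, ∃ R : ℝ, ∀ a : E, R ≤ ‖a‖ → ENNReal.ofReal (M * ‖a‖) ≤ c a)
    (μ : ℝ → Measure E) (hprob : ∀ t : ℝ, 0 < t → IsProbabilityMeasure (μ t))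
    (hsemi : ∀ s t : ℝ, 0 < s → 0 < t →
      μ (s + t) = Measure.map (fun p : E × E => p.1 + p.2) ((μ s).prod (μ t)))
    (s t : ℝ) (hs : 0 < s) (ht : 0 < t)
    (f : E → ℝ) (hfb : ∃ C, ∀ x, |f x| ≤ C) (hfu : UniformContinuous f) :
    ∀ x : E, jOp c μ (s + t) f x ≤ jOp c μ s (jOp c μ t f) x ∧
      iOp c μ s (iOp c μ t f) x ≤ iOp c μ (s + t) f x := by
  intro x
  obtain ⟨C, hC⟩ := hfb
  have hu : 0 < s + t := by linarith
  haveI := hprob s hs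
  haveI := hprob t ht
  haveI := hprob (s + t) hu
  have hfc := hfu.continuous
  -- μ_t f
  have hμt : ∀ y, |muOp (μ t) f y| ≤ C := abs_muOp_le (μ t) hC
  have hμtu : UniformContinuous (muOp (μ t) f) := muOp_uc (μ t) hC hfu
  -- J_t f = Φ_t (μ_t f)
  have hJt : ∀ y, |hopfLaxT c t (muOp (μ t) f) y| ≤ C := abs_hopfLaxT_le c hc0 ht hμt
  have hJtu : UniformContinuous (hopfLaxT c t (muOp (μ t) f)) :=
    hopfLaxT_uc c hc0 ht hμt hμtu
  -- Φ_t f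
  have hΦt : ∀ y, |hopfLaxT c t f y| ≤ C := abs_hopfLaxT_le c hc0 ht hC
  have hΦtu : UniformContinuous (hopfLaxT c t f) := hopfLaxT_uc c hc0 ht hC hfu
  -- μ_t (Φ_t f) = I_t f
  have hIt : ∀ y, |muOp (μ t) (hopfLaxT c t f) y| ≤ C := abs_muOp_le (μ t) hΦt
  have hItu : UniformContinuous (muOp (μ t) (hopfLaxT c t f)) := muOp_uc (μ t) hΦt hΦtu
  -- Φ_s (Φ_t f)
  have hΦst : ∀ y, |hopfLaxT c s (hopfLaxT c t f) y| ≤ C := abs_hopfLaxT_le c hc0 hs hΦt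
  have hΦstu : UniformContinuous (hopfLaxT c s (hopfLaxT c t f)) :=
    hopfLaxT_uc c hc0 hs hΦt hΦtu
  -- Φ_{s+t} f
  have hΦu : ∀ y, |hopfLaxT c (s+t) f y| ≤ C := abs_hopfLaxT_le c hc0 hu hC
  have hΦuu : UniformContinuous (hopfLaxT c (s+t) f) := hopfLaxT_uc c hc0 hu hC hfu
  -- convolution identity for f
  have hD : muOp (μ (s + t)) f = muOp (μ s) (muOp (μ t) f) :=
    funext (muOp_conv (hsemi s t hs ht) hC hfc)
  constructor
  · -- J inequality
    simp only [jOp]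
    rw [hD]
    have step1 : hopfLaxT c (s + t) (muOp (μ s) (muOp (μ t) f)) x ≤
        hopfLaxT c s (hopfLaxT c t (muOp (μ s) (muOp (μ t) f))) x :=
      hopfLaxT_split c hc0 hs ht (abs_muOp_le (μ s) hμt) x
    have step2 : hopfLaxT c s (hopfLaxT c t (muOp (μ s) (muOp (μ t) f))) x ≤
        hopfLaxT c s (muOp (μ s) (hopfLaxT c t (muOp (μ t) f))) x :=
      hopfLaxT_mono c hc0 hs (abs_muOp_le (μ s) hJt)
        (fun y => hopfLaxT_muOp_le c hc0 ht (μ s) hμt hμtu y) x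
    exact step1.trans step2
  · -- I inequality
    simp only [iOp]
    have pw : ∀ y, hopfLaxT c s (muOp (μ t) (hopfLaxT c t f)) y ≤
        muOp (μ t) (hopfLaxT c (s + t) f) y := by
      intro y
      have h1 : hopfLaxT c s (muOp (μ t) (hopfLaxT c t f)) y ≤
          muOp (μ t) (hopfLaxT c s (hopfLaxT c t f)) y :=
        hopfLaxT_muOp_le c hc0 hs (μ t) hΦt hΦtu y
      have h2 : muOp (μ t) (hopfLaxT c s (hopfLaxT c t f)) y ≤
          muOp (μ t) (hopfLaxT c (s + t) f) y :=
        muOp_mono (μ t) hΦst hΦstu.continuous hΦu hΦuu.continuous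
          (fun z => hopfLaxT_merge c hc0 hconv hs ht hC z) y
      exact h1.trans h2
    have hLb : ∀ y, |hopfLaxT c s (muOp (μ t) (hopfLaxT c t f)) y| ≤ C :=
      abs_hopfLaxT_le c hc0 hs hIt
    have hLc : Continuous (hopfLaxT c s (muOp (μ t) (hopfLaxT c t f))) :=
      (hopfLaxT_uc c hc0 hs hIt hItu).continuous
    have hRb : ∀ y, |muOp (μ t) (hopfLaxT c (s + t) f) y| ≤ C := abs_muOp_le (μ t) hΦu
    have hRc : Continuous (muOp (μ t) (hopfLaxT c (s + t) f)) :=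
      (muOp_uc (μ t) hΦu hΦuu).continuous
    have step1 : muOp (μ s) (hopfLaxT c s (muOp (μ t) (hopfLaxT c t f))) x ≤
        muOp (μ s) (muOp (μ t) (hopfLaxT c (s + t) f)) x :=
      muOp_mono (μ s) hLb hLc hRb hRc pw x
    have hD2 : muOp (μ (s + t)) (hopfLaxT c (s + t) f) =
        muOp (μ s) (muOp (μ t) (hopfLaxT c (s + t) f)) :=
      funext (muOp_conv (hsemi s t hs ht) hΦu hΦuu.continuous)
    rw [hD2]
    exact step1
end
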